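/- Let h, f_S, f_T : X → ℝ be measurable functions taking values in [0,1], let μ_S and μ_T be probability measures on X possessing densities φ_S and φ_T with respect to a common σ-finite measure ν, and define ε_μ(g, f) = ∫ |g(x) − f(x)| dμ(x), ε_S(h) = ε_{μ_S}(h, f_S), ε_T(h) = ε_{μ_T}(h, f_T), and d(D_S, D_T) = ∫ |φ_S(x) − φ_T(x)| dν(x). Then ε_T(h) ≤ ε_S(h) + ∫ |f_S(x) − f_T(x)| dμ_T(x) + d(D_S, D_T). -/
import Mathlib


open MeasureTheory

lemma integrable_of_abs_le_two {X : Type*} [MeasurableSpace X] {μ : Measure X}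
    [IsProbabilityMeasure μ] {g : X → ℝ} (hg : Measurable g)
    (hb : ∀ x, |g x| ≤ 2) : Integrable g μ :=
  Integrable.mono' (integrable_const 2) hg.aestronglyMeasurable (ae_of_all _ hb)

lemma density_integrable {X : Type*} [MeasurableSpace X] {ν : Measure X}
    {φ : X → ℝ} (hφ : Measurable φ) (hφ0 : ∀ x, 0 ≤ φ x)
    (hfin : ∫⁻ x, ENNReal.ofReal (φ x) ∂ν ≠ ⊤) : Integrable φ ν := by
  refine ⟨hφ.aestronglyMeasurable, ?_⟩
  rw [hasFiniteIntegral_iff_ofReal (ae_of_all _ hφ0)]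
  exact hfin.lt_top

/-- Symmetric one-sided bound in the proof of Theorem 1 (labeling discrepancy
integrated over the target domain). -/
theorem target_error_bound_target_side
    {X : Type*} [MeasurableSpace X]
    (ν : Measure X) [SigmaFinite ν]
    (φS φT : X → ℝ) (hφS : Measurable φS) (hφT : Measurable φT)
    (hφS0 : ∀ x, 0 ≤ φS x) (hφT0 : ∀ x, 0 ≤ φT x)
    (μS μT : Measure X)
    [IsProbabilityMeasure μS] [IsProbabilityMeasure μT]
    (hμS : μS = ν.withDensity (fun x => ENNReal.ofReal (φS x)))
    (hμT : μT = ν.withDensity (fun x => ENNReal.ofReal (φT x)))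
    (h fS fT : X → ℝ)
    (hh : Measurable h) (hfS : Measurable fS) (hfT : Measurable fT)
    (hh01 : ∀ x, h x ∈ Set.Icc (0 : ℝ) 1)
    (hfS01 : ∀ x, fS x ∈ Set.Icc (0 : ℝ) 1)
    (hfT01 : ∀ x, fT x ∈ Set.Icc (0 : ℝ) 1) :
    (∫ x, |h x - fT x| ∂μT) ≤
      (∫ x, |h x - fS x| ∂μS)
      + (∫ x, |fS x - fT x| ∂μT)
      + (∫ x, |φS x - φT x| ∂ν) := by
  -- basic bounds
  have habs : ∀ (u v : X → ℝ), (∀ x, u x ∈ Set.Icc (0:ℝ) 1) →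
      (∀ x, v x ∈ Set.Icc (0:ℝ) 1) → ∀ x, |u x - v x| ≤ 1 := by
    intro u v hu hv x
    have h1 := hu x; have h2 := hv x
    rw [abs_le]; constructor <;> simp at h1 h2 <;> linarith [h1.1, h1.2, h2.1, h2.2]
  have bnd : ∀ {u v : X → ℝ}, (∀ x, |u x - v x| ≤ 1) → ∀ x, |(fun y => |u y - v y|) x| ≤ 2 := by
    intro u v hb x
    simp only [abs_abs]
    linarith [hb x]
  have hhfT : ∀ x, |h x - fT x| ≤ 1 := habs _ _ hh01 hfT01
  have hhfS : ∀ x, |h x - fS x| ≤ 1 := habs _ _ hh01 hfS01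
  have hfSfT : ∀ x, |fS x - fT x| ≤ 1 := habs _ _ hfS01 hfT01
  -- integrabilities wrt μT
  have i1 : Integrable (fun x => |h x - fT x|) μT :=
    integrable_of_abs_le_two ((hh.sub hfT).abs) (bnd hhfT)
  have i2 : Integrable (fun x => |h x - fS x|) μT :=
    integrable_of_abs_le_two ((hh.sub hfS).abs) (bnd hhfS)
  have i3 : Integrable (fun x => |fS x - fT x|) μT :=
    integrable_of_abs_le_two ((hfS.sub hfT).abs) (bnd hfSfT)
  -- triangle inequality step
  have step1 : (∫ x, |h x - fT x| ∂μT) ≤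
      (∫ x, |h x - fS x| ∂μT) + (∫ x, |fS x - fT x| ∂μT) := by
    rw [← integral_add i2 i3]
    refine integral_mono i1 (i2.add i3) ?_
    intro x
    have := abs_sub_le (h x) (fS x) (fT x)
    simpa using this
  -- densities integrable over ν
  have hSfin : ∫⁻ x, ENNReal.ofReal (φS x) ∂ν ≠ ⊤ := by
    have : (ν.withDensity (fun x => ENNReal.ofReal (φS x))) Set.univ = 1 := by
      rw [← hμS]; simp
    rw [withDensity_apply _ MeasurableSet.univ] at this
    simp only [Measure.restrict_univ] at this
    rw [this]; exact ENNReal.one_ne_top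
  have hTfin : ∫⁻ x, ENNReal.ofReal (φT x) ∂ν ≠ ⊤ := by
    have : (ν.withDensity (fun x => ENNReal.ofReal (φT x))) Set.univ = 1 := by
      rw [← hμT]; simp
    rw [withDensity_apply _ MeasurableSet.univ] at this
    simp only [Measure.restrict_univ] at this
    rw [this]; exact ENNReal.one_ne_top
  have iφS : Integrable φS ν := density_integrable hφS hφS0 hSfin
  have iφT : Integrable φT ν := density_integrable hφT hφT0 hTfin
  -- express μ-integrals as ν-integrals with density
  set g : X → ℝ := fun x => |h x - fS x| with hg
  have hgmeas : Measurable g := (hh.sub hfS).abs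
  have hg0 : ∀ x, 0 ≤ g x := fun x => abs_nonneg _
  have hg1 : ∀ x, g x ≤ 1 := hhfS
  have convert_int : ∀ (φ : X → ℝ), Measurable φ → (∀ x, 0 ≤ φ x) →
      (∫ x, g x ∂(ν.withDensity (fun x => ENNReal.ofReal (φ x)))) =
        ∫ x, φ x * g x ∂ν := by
    intro φ hφm hφ0'
    have : (fun x => ENNReal.ofReal (φ x)) = fun x => ((Real.toNNReal (φ x) : NNReal) : ENNReal) := by
      funext x; simp [ENNReal.ofReal]
    rw [this, integral_withDensity_eq_integral_smul (hφm.real_toNNReal)]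
    congr 1; funext x
    simp [NNReal.smul_def, Real.coe_toNNReal _ (hφ0' x)]
  have eT : (∫ x, g x ∂μT) = ∫ x, φT x * g x ∂ν := by
    rw [hμT]; exact convert_int φT hφT hφT0
  have eS : (∫ x, g x ∂μS) = ∫ x, φS x * g x ∂ν := by
    rw [hμS]; exact convert_int φS hφS hφS0
  -- integrability of φ * g over ν
  have iφTg : Integrable (fun x => φT x * g x) ν := by
    refine Integrable.mono' iφT ((hφT.mul hgmeas).aestronglyMeasurable) (ae_of_all _ ?_)
    intro x
    rw [Real.norm_eq_abs, abs_mul, abs_of_nonneg (hφT0 x), abs_of_nonneg (hg0 x)]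
    calc φT x * g x ≤ φT x * 1 := by
          exact mul_le_mul_of_nonneg_left (hg1 x) (hφT0 x)
      _ = φT x := mul_one _
  have iφSg : Integrable (fun x => φS x * g x) ν := by
    refine Integrable.mono' iφS ((hφS.mul hgmeas).aestronglyMeasurable) (ae_of_all _ ?_)
    intro x
    rw [Real.norm_eq_abs, abs_mul, abs_of_nonneg (hφS0 x), abs_of_nonneg (hg0 x)]
    calc φS x * g x ≤ φS x * 1 := by
          exact mul_le_mul_of_nonneg_left (hg1 x) (hφS0 x)
      _ = φS x := mul_one _
  have idiff : Integrable (fun x => |φS x - φT x|) ν := (iφS.sub iφT).abs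
  -- step 2
  have step2 : (∫ x, g x ∂μT) ≤ (∫ x, g x ∂μS) + ∫ x, |φS x - φT x| ∂ν := by
    rw [eT, eS]
    have : (∫ x, φT x * g x ∂ν) - (∫ x, φS x * g x ∂ν) ≤ ∫ x, |φS x - φT x| ∂ν := by
      rw [← integral_sub iφTg iφSg]
      refine integral_mono (iφTg.sub iφSg) idiff ?_
      intro x
      show φT x * g x - φS x * g x ≤ |φS x - φT x|
      have h1 : φT x * g x - φS x * g x = (φT x - φS x) * g x := by ring
      rw [h1]
      calc (φT x - φS x) * g x ≤ |(φT x - φS x) * g x| := le_abs_self _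
        _ = |φT x - φS x| * |g x| := abs_mul _ _
        _ ≤ |φT x - φS x| * 1 := by
            exact mul_le_mul_of_nonneg_left (by rw [abs_of_nonneg (hg0 x)]; exact hg1 x) (abs_nonneg _)
        _ = |φS x - φT x| := by rw [mul_one, abs_sub_comm]
    linarith
  calc (∫ x, |h x - fT x| ∂μT)
      ≤ (∫ x, g x ∂μT) + (∫ x, |fS x - fT x| ∂μT) := step1
    _ ≤ ((∫ x, g x ∂μS) + ∫ x, |φS x - φT x| ∂ν) + (∫ x, |fS x - fT x| ∂μT) := by
        linarith [step2]
    _ = (∫ x, |h x - fS x| ∂μS) + (∫ x, |fS x - fT x| ∂μT) + (∫ x, |φS x - φT x| ∂ν) := by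
        ring
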